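/- arXiv:1110.4098 — 2 statements merged into one kernel-verified Lean document; each statement's English description precedes it below -/
import Mathlib

section
/- Let φ: A → L[τ] be a Drinfeld module of rank n. There exists a series u ∈ L̄((τ^{-1}))^× satisfying u^{-1}·φ(F_∞)·u ⊆ k̄((τ^{-1})), and any such u has all of its coefficients in the separable closure L^sep of L in L̄. -/
/-!
Axiomatic framework for the Sato–Tate setting of Drinfeld modules (D. Zywina,
"The Sato-Tate Law for Drinfeld Modules").

We fix a finite field `k` with `q` elements, a global function field `F` with field of
constants `k`, a place `∞` of `F` with completion `Finf` (valuation `ord_∞`, residue degree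
`dinf`), the ring `A ⊆ F` of functions regular away from `∞`, a field extension `L` of `k`
with algebraic closure `Lbar`, and the twisted Laurent series skew field `R = L̄((τ⁻¹))`
(with commutation rule `τ·a = a^q·τ`), which is axiomatized via its coefficient functionals.
A Drinfeld module of rank `n` is a ring homomorphism `φ : A → L[τ] ⊆ R`, together with its
canonical extension `phiinf : Finf → R` satisfying `ord_{τ⁻¹}(phiinf x) = n·dinf·ord_∞(x)`.
-/

noncomputable section
open scoped Classical

namespace SatoTate

/-- An additive `ℤ ∪ {+∞}`-valued valuation on a division ring; e.g. the normalized
valuation `ord_∞` on `F_∞`, or `ord_{τ⁻¹}` on `L̄((τ⁻¹))`. -/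
structure IsAddVal {K : Type*} [DivisionRing K] (v : K → WithTop ℤ) : Prop where
  top_iff : ∀ x, v x = ⊤ ↔ x = 0
  map_mul : ∀ x y, v (x * y) = v x + v y
  min_le : ∀ x y, min (v x) (v y) ≤ v (x + y)

/-- `v` is a (normalized) place of `F`, trivial on the field of constants `k`. -/
def IsPlaceOver (k : Type*) {F : Type*} [Field k] [Field F] [Algebra k F]
    (v : F → WithTop ℤ) : Prop :=
  IsAddVal v ∧ (∀ c : k, c ≠ 0 → v (algebraMap k F c) = 0) ∧ ∃ x, v x = 1

/-- `L` is a finitely generated field (equivalently, finitely generated over the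
prime field `k`). -/
def FinGenField (k L : Type*) [Field k] [Field L] [Algebra k L] : Prop :=
  ∃ s : Finset L, IntermediateField.adjoin k (s : Set L) = ⊤

/-- The ambient setting: `k`, `F`, `∞`, `Finf`, `A`, `L`, `L̄`, the twisted Laurent series
skew field `R = L̄((τ⁻¹))`, and a Drinfeld module `φ : A → L[τ]` of rank `n`. -/
structure Ctx (q n dinf : ℕ) (k F Finf L Lbar R : Type)
    [Field k] [Fintype k] [Field F] [Algebra k F]
    [Field Finf] [Algebra k Finf] [Algebra F Finf] [IsScalarTower k F Finf]
    [Field L] [Algebra k L]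
    [Field Lbar] [Algebra k Lbar] [Algebra L Lbar] [IsScalarTower k L Lbar]
    [DivisionRing R] : Type 1 where
  /-- `k` is the finite field with `q` elements. -/
  card_k : Fintype.card k = q
  one_lt_q : 1 < q
  n_pos : 0 < n
  dinf_pos : 0 < dinf
  /-- `L̄` is an algebraic closure of `L`. -/
  algClosure : IsAlgClosure L Lbar
  /-- `k` is the field of constants of `F`. -/
  constants : ∀ x : F, IsAlgebraic k x → x ∈ (algebraMap k F).range
  /-- `F` is a function field in one variable over `k`. -/
  function_field : ∃ t : F, Transcendental k t ∧
    FiniteDimensional (IntermediateField.adjoin k ({t} : Set F)) F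
  /-- The valuation `ord_∞` on the completion `Finf` of `F` at `∞`. -/
  vinf : Finf → WithTop ℤ
  vinf_val : IsAddVal vinf
  vinf_const : ∀ c : k, c ≠ 0 → vinf (algebraMap k Finf c) = 0
  vinf_one : ∃ x : Finf, vinf x = 1
  /-- restricted to `F`, `ord_∞` is a place of `F`. -/
  vinf_place : IsPlaceOver k fun y : F => vinf (algebraMap F Finf y)
  /-- `Finf` is complete. -/
  complete : ∀ s : ℕ → Finf,
    (∀ m : ℤ, ∃ N, ∀ i ≥ N, ∀ j ≥ N, (m : WithTop ℤ) ≤ vinf (s i - s j)) →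
    ∃ l, ∀ m : ℤ, ∃ N, ∀ i ≥ N, (m : WithTop ℤ) ≤ vinf (s i - l)
  /-- `F` is dense in `Finf`. -/
  dense : ∀ x : Finf, ∀ m : ℤ, ∃ y : F, (m : WithTop ℤ) ≤ vinf (x - algebraMap F Finf y)
  /-- The residue field `𝔽_∞` of `∞` has degree `dinf` over `k`: the valuation ring of
  `ord_∞` has exactly `q ^ (dinf * m)` distinct balls of radius `m`. -/
  residue : ∀ m : ℕ, 0 < m → Nat.card
    {s : Set Finf // ∃ x, 0 ≤ vinf x ∧ s = {y | 0 ≤ vinf y ∧ (m : WithTop ℤ) ≤ vinf (y - x)}}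
      = q ^ (dinf * m)
  /-- the inclusion of constants `L̄ → L̄((τ⁻¹))`. -/
  cst : Lbar →+* R
  /-- the twist `τ` (the `q`-power Frobenius). -/
  τ : R
  /-- the commutation rule `τ · a = a^q · τ`. -/
  τ_comm : ∀ a : Lbar, τ * cst a = cst (a ^ q) * τ
  /-- `coeff f i` is the coefficient of `τ⁻ⁱ` in `f = ∑ᵢ (coeff f i)·τ⁻ⁱ`. -/
  coeff : R → ℤ → Lbar
  coeff_add : ∀ f g i, coeff (f + g) i = coeff f i + coeff g i
  coeff_injective : ∀ f g : R, (∀ i, coeff f i = coeff g i) → f = g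
  coeff_bddBelow : ∀ f : R, ∃ N : ℤ, ∀ i < N, coeff f i = 0
  coeff_surjective : ∀ c : ℤ → Lbar, (∃ N : ℤ, ∀ i < N, c i = 0) →
    ∃ f : R, ∀ i, coeff f i = c i
  coeff_monomial : ∀ (a : Lbar) (m i : ℤ), coeff (cst a * τ ^ m) i = if i = -m then a else 0
  /-- the valuation `ord_{τ⁻¹}` on `R`. -/
  w : R → WithTop ℤ
  w_val : IsAddVal w
  w_coeff : ∀ (f : R) (i : ℤ), (i : WithTop ℤ) ≤ w f ↔ ∀ j < i, coeff f j = 0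
  /-- the coefficientwise action of `Gal(L̄/L)` on `R = L̄((τ⁻¹))`. -/
  galAct : (Lbar ≃ₐ[L] Lbar) → R →+* R
  galAct_coeff : ∀ (σ : Lbar ≃ₐ[L] Lbar) (f : R) (i : ℤ),
    coeff (galAct σ f) i = σ (coeff f i)
  /-- `A ⊆ F` is the ring of functions regular away from `∞`. -/
  A : Subring F
  A_spec : ∀ x : F, x ∈ A ↔ ∀ v : F → WithTop ℤ, IsPlaceOver k v →
    v ≠ (fun y : F => vinf (algebraMap F Finf y)) → 0 ≤ v x
  /-- the Drinfeld module `φ : A → L[τ] ⊆ L̄((τ⁻¹))`. -/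
  φ : ↥A →+* R
  /-- the coefficients of each `φ_a` lie in `L`. -/
  φ_coeff_L : ∀ (a : ↥A) (i : ℤ), coeff (φ a) i ∈ (algebraMap L Lbar).range
  /-- each `φ_a` is a twisted polynomial in `τ`. -/
  φ_poly : ∀ (a : ↥A) (i : ℤ), 0 < i → coeff (φ a) i = 0
  /-- `φ(A)` is not contained in the constants. -/
  φ_nonconst : ∃ (a : ↥A) (i : ℤ), i ≠ 0 ∧ coeff (φ a) i ≠ 0
  /-- the canonical extension of `φ` to `Finf`. -/
  phiinf : Finf →+* R
  phiinf_extends : ∀ a : ↥A, phiinf (algebraMap F Finf (a : F)) = φ a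
  /-- `φ` has rank `n`: `ord_{τ⁻¹}(φ_x) = n·dinf·ord_∞(x)`. -/
  rank : ∀ x : Finf, w (phiinf x) = (n * dinf) • vinf x
  /-- `cpoly f = det(T·1 − f)` is the reduced characteristic polynomial of `f ∈ D_φ`
  over `Finf`: the monic polynomial of degree `n` that is a power of the minimal
  polynomial of `f` over `Finf`. -/
  cpoly : R → Polynomial Finf
  cpoly_spec : ∀ f : R, (∀ a : ↥A, f * φ a = φ a * f) →
    (cpoly f).Monic ∧ (cpoly f).natDegree = n ∧
    (∑ i ∈ Finset.range (n + 1), phiinf ((cpoly f).coeff i) * f ^ i = 0) ∧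
    ∃ (g : Polynomial Finf) (m : ℕ), g.Monic ∧ Irreducible g ∧
      (∑ i ∈ Finset.range (g.natDegree + 1), phiinf (g.coeff i) * f ^ i = 0) ∧
      cpoly f = g ^ m

/-- The units of the centralizer of a subset `s ⊆ R`, as a subgroup of `Rˣ`. -/
def unitsCentralizer {R : Type*} [Ring R] (s : Set R) : Subgroup Rˣ where
  carrier := {y : Rˣ | (y : R) ∈ Subring.centralizer s}
  one_mem' := by
    show ((1 : Rˣ) : R) ∈ Subring.centralizer s
    rw [Units.val_one]; exact Subring.one_mem _
  mul_mem' := by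
    intro a b ha hb
    show ((a * b : Rˣ) : R) ∈ Subring.centralizer s
    rw [Units.val_mul]; exact Subring.mul_mem _ ha hb
  inv_mem' := by
    intro y hy
    rw [Set.mem_setOf_eq, Subring.mem_centralizer_iff] at hy ⊢
    intro g hg
    have h := hy g hg
    have h2 : (y : R) * (g * (↑y⁻¹ : R)) = g := by
      rw [← mul_assoc, ← h, mul_assoc, Units.mul_inv, mul_one]
    calc g * (↑y⁻¹ : R) = ↑y⁻¹ * ((y : R) * (g * ↑y⁻¹)) := by
          rw [← mul_assoc, Units.inv_mul, one_mul]
      _ = ↑y⁻¹ * g := by rw [h2]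

namespace Ctx

variable {q n dinf : ℕ} {k F Finf L Lbar R : Type}
  [Field k] [Fintype k] [Field F] [Algebra k F]
  [Field Finf] [Algebra k Finf] [Algebra F Finf] [IsScalarTower k F Finf]
  [Field L] [Algebra k L]
  [Field Lbar] [Algebra k Lbar] [Algebra L Lbar] [IsScalarTower k L Lbar]
  [DivisionRing R]

variable (C : Ctx q n dinf k F Finf L Lbar R)

/-- `D_φ`: the centralizer of `φ(A)` in `R = L̄((τ⁻¹))`; a central `Finf`-division
algebra with invariant `−1/n`. -/
def D : Subring R := Subring.centralizer (Set.range fun a : ↥C.A => C.φ a)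

/-- membership in the twisted polynomial ring `L[τ] ⊆ R`. -/
def MemLtau (f : R) : Prop :=
  (∀ i : ℤ, 0 < i → C.coeff f i = 0) ∧ ∀ i : ℤ, C.coeff f i ∈ (algebraMap L Lbar).range

/-- membership in the twisted polynomial ring `L̄[τ] ⊆ R`. -/
def MemLbartau (f : R) : Prop := ∀ i : ℤ, 0 < i → C.coeff f i = 0

/-- the endomorphism ring `End_L(φ)`: the centralizer of `φ(A)` in `L[τ]`. -/
def EndL : Set R := {f | C.MemLtau f ∧ ∀ a : ↥C.A, f * C.φ a = C.φ a * f}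

/-- the endomorphism ring `End_{L̄}(φ)`: the centralizer of `φ(A)` in `L̄[τ]`. -/
def EndLbar : Set R := {f | C.MemLbartau f ∧ ∀ a : ↥C.A, f * C.φ a = C.φ a * f}

/-- `B_φ`: the centralizer of `End_{L̄}(φ)` in `R = L̄((τ⁻¹))`. -/
def B : Subring R := Subring.centralizer C.EndLbar

/-- `σ ∈ Gal(L̄/L)` belongs to the Weil group `W_L` with `deg σ = d`: the restriction of
`σ` to the algebraic closure `k̄` of `k` in `L̄` is the `d`-th power of `x ↦ x^q`. -/
def WeilCond (_C : Ctx q n dinf k F Finf L Lbar R) (σ : Lbar ≃ₐ[L] Lbar) (d : ℤ) : Prop :=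
  ∀ x : Lbar, IsAlgebraic k x → σ x ^ q ^ (-d).toNat = x ^ q ^ d.toNat

/-- `u ∈ L̄((τ⁻¹))^×` has coefficients in `L^sep` and satisfies
`u⁻¹ · φ(A) · u ⊆ k̄((τ⁻¹))`. -/
def UGood (u : R) : Prop :=
  u ≠ 0 ∧ (∀ i : ℤ, C.coeff u i ∈ separableClosure L Lbar) ∧
    ∀ (a : ↥C.A) (i : ℤ), IsAlgebraic k (C.coeff (u⁻¹ * C.φ a * u) i)

/-- `u ∈ L̄((τ⁻¹))^×` satisfies `u⁻¹ · φ(Finf) · u ⊆ k̄((τ⁻¹))`. -/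
def UGoodInf (u : R) : Prop :=
  u ≠ 0 ∧ ∀ (x : Finf) (i : ℤ), IsAlgebraic k (C.coeff (u⁻¹ * C.phiinf x * u) i)

/-- the Sato–Tate representation: `ρ_∞(σ) = σ(u) · τ^{deg σ} · u⁻¹`. -/
def rho (σ : Lbar ≃ₐ[L] Lbar) (d : ℤ) (u : R) : R := C.galAct σ u * C.τ ^ d * u⁻¹

/-- the image `ρ_∞(W_L) ⊆ D_φ^×`, as a subset of `R`. -/
def rhoSet : Set R :=
  {r | ∃ (σ : Lbar ≃ₐ[L] Lbar) (d : ℤ) (u : R), C.WeilCond σ d ∧ C.UGood u ∧ r = C.rho σ d u}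

/-- `D_φ^×`, as a subgroup of `Rˣ`. -/
def DUnits : Subgroup Rˣ := unitsCentralizer (Set.range fun a : ↥C.A => C.φ a)

/-- `B_φ^×`, as a subgroup of `Rˣ`. -/
def BUnits : Subgroup Rˣ := unitsCentralizer C.EndLbar

/-- `H` contains a neighbourhood of `1` in `K` for the `∞`-adic (i.e. `ord_{τ⁻¹}`-adic)
topology; together with `H ≤ K` this says that `H` is an open subgroup of `K`. -/
def OpenIn (K H : Subgroup Rˣ) : Prop :=
  ∃ m : ℤ, ∀ y : Rˣ, y ∈ K → (m : WithTop ℤ) ≤ C.w ((y : R) - 1) → y ∈ H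

/-- `φ` has generic characteristic: `∂ ∘ φ : A → L` is injective. -/
def GenericChar : Prop := ∀ a : ↥C.A, C.coeff (C.φ a) 0 = 0 → a = 0

/-- `End_{L̄}(φ) = φ(A)`: no extra endomorphisms. -/
def NoExtraEnd : Prop := ∀ f ∈ C.EndLbar, ∃ a : ↥C.A, f = C.φ a

/-- the image of `End_L(φ) ⊗_A Finf` in `D_φ`. -/
def endSpan : Set R :=
  {f | ∃ (m : ℕ) (e : Fin m → R) (z : Fin m → Finf),
    (∀ i, e i ∈ C.EndL) ∧ f = ∑ i, e i * C.phiinf (z i)}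

/-- the reduced trace `tr : D_φ → Finf` (read off from the reduced characteristic
polynomial). -/
def Trd (f : R) : Finf := -((C.cpoly f).coeff (n - 1))

/-- the reduced norm `det : D_φ → Finf` (read off from the reduced characteristic
polynomial). -/
def Nrd (f : R) : Finf := (-1) ^ n * (C.cpoly f).coeff 0

end Ctx

/-!
Pick `a ∈ A` with `φ_a` non-constant, of degree `m` in `τ`. Solving `u₀ τ^m = φ_a u₀`
coefficient by coefficient in `L^sep[[τ⁻¹]]` amounts to finding roots of the separable
polynomials `c X^{q^m} - X + e`, so such a `u₀` exists. Then `u₀⁻¹ φ(x) u₀` commutes with `τ^m`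
for every `x ∈ F_∞`, which forces its coefficients to satisfy `z^{q^m} = z`, i.e. to lie in `k̄`.
Conversely, if `u⁻¹ φ(F_∞) u ⊆ k̄((τ⁻¹))`, then `v = u₀⁻¹ u` satisfies `τ^m v = v h` with
`h = u⁻¹ φ_a u` in `k̄((τ⁻¹))`, and comparing coefficients shows inductively that each
coefficient of `v` is a root of `z^{q^m} = β z + γ` with `β, γ ∈ k̄`. Hence `u = u₀ v` has
coefficients in `L^sep`.
-/

namespace IsAddVal

variable {K : Type*} [DivisionRing K] {v : K → WithTop ℤ}

theorem map_one (hv : IsAddVal v) : v 1 = 0 := by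
  obtain ⟨a, ha⟩ := WithTop.ne_top_iff_exists.mp ((hv.top_iff 1).not.mpr one_ne_zero)
  have h := hv.map_mul 1 1
  rw [one_mul] at h
  rw [← ha] at h ⊢
  norm_cast at h ⊢
  omega

theorem map_conj (hv : IsAddVal v) {u : K} (hu : u ≠ 0) (f : K) : v (u⁻¹ * f * u) = v f := by
  rw [hv.map_mul, hv.map_mul, add_right_comm, ← hv.map_mul, inv_mul_cancel₀ hu, hv.map_one,
    zero_add]

end IsAddVal

theorem commute_conj {G₀ : Type*} [GroupWithZero G₀] {a b u : G₀} (hu : u ≠ 0)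
    (h : Commute a b) : Commute (u⁻¹ * a * u) (u⁻¹ * b * u) := by
  simp only [Commute, SemiconjBy, mul_assoc, mul_inv_cancel_left₀ hu, h.left_comm]

open Polynomial in
theorem isAlgebraic_of_pow_eq_mul_add {K E : Type*} [Field K] [Field E] [Algebra K E]
    {β γ z : E} (hβ : IsAlgebraic K β) (hγ : IsAlgebraic K γ) {N : ℕ} (hN : 1 < N)
    (h : z ^ N = β * z + γ) : IsAlgebraic K z := by
  let b : algebraicClosure K E := ⟨β, mem_algebraicClosure_iff.mpr hβ⟩
  let c : algebraicClosure K E := ⟨γ, mem_algebraicClosure_iff.mpr hγ⟩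
  refine .restrictScalars_of_isIntegral K (S := algebraicClosure K E)
    ⟨X ^ N - C b * X - C c, fun h0 => ?_, by simp [b, c, h]⟩
  have := congrArg (coeff · N) h0
  simp [coeff_X, coeff_C, if_neg hN.ne, if_neg (by omega : N ≠ 0)] at this

theorem mem_separableClosure_of_isAlgebraic {k L E : Type*} [Field k] [PerfectField k] [Field L]
    [Field E] [Algebra k L] [Algebra k E] [Algebra L E] [IsScalarTower k L E] {x : E}
    (hx : IsAlgebraic k x) : x ∈ separableClosure L E :=
  mem_separableClosure_iff.mpr <| IsSeparable.tower_top L <|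
    PerfectField.separable_of_irreducible (minpoly.irreducible hx.isIntegral)

open Polynomial in
/-- `d X^N - X + e` has derivative `-1`, hence `N ≥ 2` distinct roots. -/
theorem exists_ne_zero_mul_pow_add_eq {T : Type*} [Field T] [IsSepClosed T] {N : ℕ} (hN : 1 < N)
    (hNT : (N : T) = 0) {d : T} (hd : d ≠ 0) (e : T) : ∃ z ≠ 0, d * z ^ N + e = z := by
  set P : T[X] := C d * X ^ N - X + C e
  have hsep : P.Separable := by
    rw [Polynomial.Separable, show derivative P = -1 by simp [P, derivative_X_pow, hNT]]
    exact isCoprime_one_right.neg_right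
  have hdeg : P.natDegree = N := by
    simp only [P]
    compute_degree!
    · rw [if_neg hN.ne, if_neg (by omega)]
      simpa using hd
    · omega
  by_contra! hroots
  have hzero : ∀ x ∈ P.rootSet T, x = 0 := fun x hx => by
    by_contra hx0
    refine hroots x hx0 ?_
    have := (mem_rootSet.mp hx).2
    simp only [P, aeval_def, eval₂_add, eval₂_sub, eval₂_mul, eval₂_pow, eval₂_X, eval₂_C] at this
    simpa [sub_add_eq_add_sub, sub_eq_zero] using this
  have hcard := card_rootSet_eq_natDegree (K := T) hsep
    (by simpa using IsSepClosed.splits_of_separable P hsep)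
  have : Fintype.card (P.rootSet T) ≤ 1 :=
    Fintype.card_le_one_iff.mpr fun x y => Subtype.ext ((hzero x x.2).trans (hzero y y.2).symm)
  omega

theorem exists_solution_twisted_recurrence {T : Type*} [Field T] [IsSepClosed T] {q m : ℕ}
    (hq : 1 < q) (hqT : (q : T) = 0) (hm : 0 < m) (d : ℕ → T) (hd : d m ≠ 0) :
    ∃ c : ℤ → T, (∀ i < 0, c i = 0) ∧ c 0 ≠ 0 ∧
      ∀ i : ℤ, c (i + m) = ∑ r ∈ Finset.range (m + 1), d r * c (i + r) ^ q ^ r := by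
  have hNT : ((q ^ m : ℕ) : T) = 0 := by rw [Nat.cast_pow, hqT, zero_pow hm.ne']
  choose root hroot_ne hroot using exists_ne_zero_mul_pow_add_eq (Nat.one_lt_pow hm.ne' hq) hNT hd
  let lower (s : ℤ → T) (i : ℤ) : T := ∑ r ∈ Finset.range m, d r * s (i + r) ^ q ^ r
  let seq : ℕ → T := Nat.strongRec fun j prev =>
    root (lower (fun t => if h : 0 ≤ t ∧ t < j then prev t.toNat (by omega) else 0) (j - m))
  let c : ℤ → T := fun t => if 0 ≤ t then seq t.toNat else 0
  have hc_neg : ∀ i < 0, c i = 0 := fun i hi => if_neg (by omega)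
  have hc : ∀ i : ℤ, 0 ≤ i + m → c (i + m) = root (lower c i) := by
    intro i hi
    obtain ⟨j, hj⟩ : ∃ j : ℕ, (j : ℤ) = i + m := ⟨(i + m).toNat, by omega⟩
    obtain rfl : i = j - m := by omega
    rw [sub_add_cancel]
    show (if 0 ≤ (j : ℤ) then seq (j : ℤ).toNat else 0) = _
    rw [if_pos j.cast_nonneg, Int.toNat_natCast, show seq j = _ from Nat.strongRec_eq _ j]
    refine congrArg root (Finset.sum_congr rfl fun r hr => ?_)
    have hr : r < m := Finset.mem_range.mp hr
    beta_reduce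
    by_cases h0 : 0 ≤ (j : ℤ) - m + r
    · rw [dif_pos ⟨h0, by omega⟩]
      exact congrArg (fun x => d r * x ^ q ^ r) (if_pos h0).symm
    · rw [dif_neg (by omega), hc_neg _ (by omega)]
  refine ⟨c, hc_neg, ?_, fun i => ?_⟩
  · have := hc (-m) (by simp)
    rw [neg_add_cancel] at this
    exact this ▸ hroot_ne _
  · rcases lt_or_ge (i + m) 0 with hneg | hnonneg
    · rw [hc_neg _ hneg]
      refine (Finset.sum_eq_zero fun r hr => ?_).symm
      rw [hc_neg _ (by rw [Finset.mem_range] at hr; omega), zero_pow (by positivity), mul_zero]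
    · rw [Finset.sum_range_succ, hc i hnonneg, add_comm]
      exact (hroot _).symm

namespace Ctx

variable {q n dinf : ℕ} {k F Finf L Lbar R : Type}
  [Field k] [Fintype k] [Field F] [Algebra k F]
  [Field Finf] [Algebra k Finf] [Algebra F Finf] [IsScalarTower k F Finf]
  [Field L] [Algebra k L]
  [Field Lbar] [Algebra k Lbar] [Algebra L Lbar] [IsScalarTower k L Lbar]
  [DivisionRing R]

variable (C : Ctx q n dinf k F Finf L Lbar R)

def frob : Lbar ≃ₐ[k] Lbar :=
  haveI := C.algClosure.isAlgClosed
  FiniteField.frobeniusAlgEquiv k Lbar (ringExpChar Lbar)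

theorem frob_apply (x : Lbar) : C.frob x = x ^ q := by
  rw [frob, FiniteField.frobeniusAlgEquiv_apply, C.card_k]

theorem frob_zpow_natCast_apply (s : ℕ) (x : Lbar) : (C.frob ^ (s : ℤ)) x = x ^ q ^ s := by
  rw [zpow_natCast, AlgEquiv.coe_pow, show ⇑C.frob = (· ^ q) from funext C.frob_apply,
    pow_iterate]

def coeffAddHom (i : ℤ) : R →+ Lbar := AddMonoidHom.mk' (C.coeff · i) (C.coeff_add · · i)

theorem coeff_zero (i : ℤ) : C.coeff 0 i = 0 := map_zero (C.coeffAddHom i)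

theorem coeff_sub (f g : R) (i : ℤ) : C.coeff (f - g) i = C.coeff f i - C.coeff g i :=
  map_sub (C.coeffAddHom i) f g

theorem coeff_sum {ι : Type*} (s : Finset ι) (f : ι → R) (i : ℤ) :
    C.coeff (∑ a ∈ s, f a) i = ∑ a ∈ s, C.coeff (f a) i :=
  map_sum (C.coeffAddHom i) f s

theorem coeff_mul_eq_zero_of_lt {x y : R} {N M : ℤ} (hx : ∀ j < N, C.coeff x j = 0)
    (hy : ∀ j < M, C.coeff y j = 0) {i : ℤ} (hi : i < N + M) : C.coeff (x * y) i = 0 := by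
  refine (C.w_coeff (x * y) (N + M)).mp ?_ i hi
  rw [C.w_val.map_mul, WithTop.coe_add]
  exact add_le_add ((C.w_coeff x N).mpr hx) ((C.w_coeff y M).mpr hy)

theorem coeff_tau_zpow (s i : ℤ) : C.coeff (C.τ ^ s) i = if i = -s then 1 else 0 := by
  simpa using C.coeff_monomial 1 s i

theorem tau_ne_zero : C.τ ≠ 0 := fun h => by
  simpa [h, C.coeff_zero] using C.coeff_tau_zpow 1 (-1)

theorem tau_zpow_mul_cst (s : ℤ) (a : Lbar) :
    C.τ ^ s * C.cst a = C.cst ((C.frob ^ s) a) * C.τ ^ s := by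
  have hτ : ∀ a, SemiconjBy C.τ (C.cst a) (C.cst (C.frob a)) := fun a => by
    rw [SemiconjBy, C.τ_comm, C.frob_apply]
  suffices ∀ a, SemiconjBy (C.τ ^ s) (C.cst a) (C.cst ((C.frob ^ s) a)) from this a
  induction s using Int.induction_on with
  | zero => simp
  | succ s ih =>
    intro a
    rw [zpow_add_one₀ C.tau_ne_zero, zpow_add_one, AlgEquiv.mul_apply]
    exact (ih _).mul_left (hτ a)
  | pred s ih =>
    intro a
    rw [zpow_sub_one₀ C.tau_ne_zero, zpow_sub_one, AlgEquiv.mul_apply]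
    refine (ih _).mul_left ?_
    simpa [AlgEquiv.aut_inv] using (hτ (C.frob⁻¹ a)).inv_symm_left₀

theorem cst_mul_tau_zpow_mul_cst_mul_tau_zpow (a b : Lbar) (s t : ℤ) :
    C.cst a * C.τ ^ s * (C.cst b * C.τ ^ t) = C.cst (a * (C.frob ^ s) b) * C.τ ^ (s + t) := by
  rw [map_mul, zpow_add₀ C.tau_ne_zero, mul_assoc, ← mul_assoc (C.τ ^ s), C.tau_zpow_mul_cst]
  simp only [mul_assoc]

def trunc (f : R) (N M : ℤ) : R := ∑ a ∈ Finset.Icc N M, C.cst (C.coeff f a) * C.τ ^ (-a)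

theorem coeff_trunc (f : R) (N M j : ℤ) :
    C.coeff (C.trunc f N M) j = if j ∈ Finset.Icc N M then C.coeff f j else 0 := by
  simp only [trunc, C.coeff_sum, C.coeff_monomial, neg_neg, Finset.sum_ite_eq]

theorem coeff_sub_trunc_eq_zero {f : R} {N : ℤ} (hf : ∀ j < N, C.coeff f j = 0) (M : ℤ) :
    ∀ j < M + 1, C.coeff (f - C.trunc f N M) j = 0 := by
  intro j hj
  rw [C.coeff_sub, C.coeff_trunc]
  split_ifs with h
  · exact sub_self _
  · rw [sub_zero]
    exact hf j (by simp only [Finset.mem_Icc] at h; omega)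

theorem coeff_mul_eq_coeff_trunc_mul_trunc {f g : R} {Nf Ng : ℤ}
    (hf : ∀ j < Nf, C.coeff f j = 0) (hg : ∀ j < Ng, C.coeff g j = 0) (i : ℤ) :
    C.coeff (f * g) i = C.coeff (C.trunc f Nf (i - Ng) * C.trunc g Ng (i - Nf)) i := by
  set t := C.trunc f Nf (i - Ng)
  set s := C.trunc g Ng (i - Nf)
  have ht : ∀ j < Nf, C.coeff t j = 0 := fun j hj => by
    rw [C.coeff_trunc, if_neg (by simp only [Finset.mem_Icc]; omega)]
  have h₁ : C.coeff (t * (g - s)) i = 0 :=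
    C.coeff_mul_eq_zero_of_lt ht (C.coeff_sub_trunc_eq_zero hg _) (by omega)
  have h₂ : C.coeff ((f - t) * g) i = 0 :=
    C.coeff_mul_eq_zero_of_lt (C.coeff_sub_trunc_eq_zero hf _) hg (by omega)
  rw [show f * g = t * s + t * (g - s) + (f - t) * g by noncomm_ring, C.coeff_add, C.coeff_add,
    h₁, h₂, add_zero, add_zero]

theorem coeff_mul {f g : R} {Nf Ng : ℤ} (hf : ∀ j < Nf, C.coeff f j = 0)
    (hg : ∀ j < Ng, C.coeff g j = 0) (i : ℤ) :
    C.coeff (f * g) i =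
      ∑ a ∈ Finset.Icc Nf (i - Ng), C.coeff f a * (C.frob ^ (-a)) (C.coeff g (i - a)) := by
  rw [C.coeff_mul_eq_coeff_trunc_mul_trunc hf hg, trunc, trunc, Finset.sum_mul_sum, C.coeff_sum]
  refine Finset.sum_congr rfl fun a ha => ?_
  simp only [C.coeff_sum, C.cst_mul_tau_zpow_mul_cst_mul_tau_zpow, C.coeff_monomial]
  rw [Finset.sum_eq_single_of_mem (i - a) (by simp only [Finset.mem_Icc] at ha ⊢; omega)
    fun b _ hb => if_neg (by omega), if_pos (by ring)]

theorem coeff_cst_mul_tau_zpow_mul (c : Lbar) (s : ℤ) (g : R) (i : ℤ) :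
    C.coeff (C.cst c * C.τ ^ s * g) i = c * (C.frob ^ s) (C.coeff g (i + s)) := by
  obtain ⟨N, hN⟩ := C.coeff_bddBelow g
  have hmono := C.coeff_monomial c s
  rw [C.coeff_mul (Nf := -s) (Ng := min N (i + s)) (fun j hj => by rw [hmono, if_neg hj.ne])
      (fun j hj => hN j (by omega)),
    Finset.sum_eq_single_of_mem (-s) (by simp only [Finset.mem_Icc]; omega)
      fun a _ ha => by rw [hmono, if_neg ha, zero_mul],
    hmono, if_pos rfl, neg_neg, sub_neg_eq_add]

theorem coeff_tau_zpow_mul (s : ℤ) (g : R) (i : ℤ) :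
    C.coeff (C.τ ^ s * g) i = (C.frob ^ s) (C.coeff g (i + s)) := by
  simpa using C.coeff_cst_mul_tau_zpow_mul 1 s g i

theorem coeff_mul_tau_zpow (f : R) (s i : ℤ) : C.coeff (f * C.τ ^ s) i = C.coeff f (i + s) := by
  obtain ⟨N, hN⟩ := C.coeff_bddBelow f
  rw [C.coeff_mul (Nf := min N (i + s)) (Ng := -s) (fun j hj => hN j (by omega))
      (fun j hj => by rw [C.coeff_tau_zpow, if_neg hj.ne]),
    Finset.sum_eq_single_of_mem (i + s) (by simp only [Finset.mem_Icc]; omega)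
      fun a _ ha => by rw [C.coeff_tau_zpow, if_neg (by omega), map_zero, mul_zero],
    C.coeff_tau_zpow, if_pos (by ring), map_one, mul_one]

theorem eq_sum_cst_mul_tau_pow {f : R} {m : ℕ} (hlow : ∀ j < -(m : ℤ), C.coeff f j = 0)
    (hpos : ∀ j, 0 < j → C.coeff f j = 0) :
    f = ∑ r ∈ Finset.range (m + 1), C.cst (C.coeff f (-r)) * C.τ ^ (r : ℤ) := by
  refine C.coeff_injective _ _ fun i => ?_
  simp only [C.coeff_sum, C.coeff_monomial]
  by_cases hi : -(m : ℤ) ≤ i ∧ i ≤ 0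
  · rw [Finset.sum_eq_single_of_mem (-i).toNat (by rw [Finset.mem_range]; omega)
      fun r _ hr => if_neg (by omega),
      if_pos (by omega), show -((-i).toNat : ℤ) = i by omega]
  · rw [Finset.sum_eq_zero fun r hr => if_neg (by rw [Finset.mem_range] at hr; omega)]
    rcases lt_or_ge i (-m) with h | h
    · exact hlow i h
    · exact hpos i (by omega)

theorem coeff_mul_eq_sum_range {f : R} {m : ℕ} (hlow : ∀ j < -(m : ℤ), C.coeff f j = 0)
    (hpos : ∀ j, 0 < j → C.coeff f j = 0) (g : R) (i : ℤ) :
    C.coeff (f * g) i = ∑ r ∈ Finset.range (m + 1), C.coeff f (-r) * C.coeff g (i + r) ^ q ^ r := by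
  conv_lhs => rw [C.eq_sum_cst_mul_tau_pow hlow hpos]
  simp only [Finset.sum_mul, C.coeff_sum, C.coeff_cst_mul_tau_zpow_mul, C.frob_zpow_natCast_apply]

theorem isAlgebraic_coeff_of_commute_tau_pow {g : R} {m : ℕ} (hm : 0 < m)
    (hg : Commute g (C.τ ^ (m : ℤ))) (i : ℤ) : IsAlgebraic k (C.coeff g i) := by
  have hfix := congrArg (C.coeff · (i - m)) hg.eq
  simp only [C.coeff_mul_tau_zpow, C.coeff_tau_zpow_mul, sub_add_cancel,
    C.frob_zpow_natCast_apply] at hfix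
  exact isAlgebraic_of_pow_eq_mul_add isAlgebraic_one isAlgebraic_zero
    (Nat.one_lt_pow hm.ne' C.one_lt_q) (by rw [← hfix, one_mul, add_zero])

theorem isAlgebraic_coeff_of_tau_pow_mul_eq_mul {v h : R} {m : ℕ} (hm : 0 < m)
    (hlow : ∀ j < -(m : ℤ), C.coeff h j = 0) (halg : ∀ j, IsAlgebraic k (C.coeff h j))
    (hvh : C.τ ^ (m : ℤ) * v = v * h) (t : ℤ) : IsAlgebraic k (C.coeff v t) := by
  obtain ⟨N, hN⟩ := C.coeff_bddBelow v
  induction t using Int.strongRec (m := N) with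
  | lt t ht => rw [hN t ht]; exact isAlgebraic_zero
  | ge t ht ih =>
    have key := congrArg (C.coeff · (t - m)) hvh
    simp only [C.coeff_tau_zpow_mul, sub_add_cancel, C.frob_zpow_natCast_apply] at key
    rw [C.coeff_mul hN hlow, sub_neg_eq_add, sub_add_cancel,
      ← Finset.sum_erase_add _ _ (Finset.right_mem_Icc.mpr ht), Finset.Icc_erase_right] at key
    have hβ : IsAlgebraic k ((C.frob ^ (-t)) (C.coeff h (-m))) :=
      (halg _).algHom (C.frob ^ (-t)).toAlgHom
    refine isAlgebraic_of_pow_eq_mul_add hβ ?_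
      (Nat.one_lt_pow hm.ne' C.one_lt_q) (by rw [key, sub_sub_cancel_left]; ring)
    refine mem_algebraicClosure_iff.mp (sum_mem fun a ha => mul_mem ?_ ?_)
    · exact mem_algebraicClosure_iff.mpr (ih a (Finset.mem_Ico.mp ha).2)
    · exact mem_algebraicClosure_iff.mpr ((halg _).algHom (C.frob ^ (-a)).toAlgHom)

theorem coeff_mul_mem_separableClosure {x y : R}
    (hx : ∀ i, C.coeff x i ∈ separableClosure L Lbar) (hy : ∀ i, IsAlgebraic k (C.coeff y i))
    (i : ℤ) : C.coeff (x * y) i ∈ separableClosure L Lbar := by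
  obtain ⟨Nx, hNx⟩ := C.coeff_bddBelow x
  obtain ⟨Ny, hNy⟩ := C.coeff_bddBelow y
  rw [C.coeff_mul hNx hNy]
  exact sum_mem fun a _ => mul_mem (hx a)
    (mem_separableClosure_of_isAlgebraic ((hy _).algHom (C.frob ^ (-a)).toAlgHom))

theorem exists_coeff_phi_ne_zero : ∃ (a : C.A) (m : ℕ), 0 < m ∧
    (∀ j < -(m : ℤ), C.coeff (C.φ a) j = 0) ∧ C.coeff (C.φ a) (-m) ≠ 0 := by
  obtain ⟨a, i, hi0, hi⟩ := C.φ_nonconst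
  obtain ⟨N, hN⟩ := C.coeff_bddBelow (C.φ a)
  obtain ⟨j, hj, hjmin⟩ := Int.exists_least_of_bdd (P := fun j => C.coeff (C.φ a) j ≠ 0)
    ⟨N, fun j hj => not_lt.mp fun h => hj (hN j h)⟩ ⟨i, hi⟩
  have hi_neg : i < 0 := lt_of_le_of_ne (not_lt.mp fun h => hi (C.φ_poly a i h)) hi0
  have hj_neg : j < 0 := (hjmin i hi).trans_lt hi_neg
  refine ⟨a, (-j).toNat, by omega, fun l hl => not_not.mp fun h => ?_, ?_⟩
  · exact absurd (hjmin l h) (by omega)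
  · rwa [show -((-j).toNat : ℤ) = j by omega]

theorem exists_mul_tau_pow_eq_phi_mul {a : C.A} {m : ℕ} (hm : 0 < m)
    (hlow : ∀ j < -(m : ℤ), C.coeff (C.φ a) j = 0) (hlead : C.coeff (C.φ a) (-m) ≠ 0) :
    ∃ u : R, u ≠ 0 ∧ (∀ i, C.coeff u i ∈ separableClosure L Lbar) ∧
      u * C.τ ^ (m : ℤ) = C.φ a * u := by
  have := C.algClosure.isAlgClosed
  have := (separableClosure.isSepClosure L Lbar).sep_closed
  have hd : ∀ r : ℕ, C.coeff (C.φ a) (-r) ∈ separableClosure L Lbar := fun r => by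
    obtain ⟨l, hl⟩ := C.φ_coeff_L a (-r)
    exact hl ▸ IntermediateField.algebraMap_mem _ l
  have hqT : (q : separableClosure L Lbar) = 0 := by
    have : (q : Lbar) = 0 := by
      rw [← map_natCast (algebraMap k Lbar), ← C.card_k, FiniteField.cast_card_eq_zero, map_zero]
    exact (separableClosure L Lbar).val.injective (by rw [map_natCast, map_zero, this])
  obtain ⟨c, hc_neg, hc0, hrec⟩ := exists_solution_twisted_recurrence C.one_lt_q hqT hm
    (fun r => ⟨_, hd r⟩) (by simpa [Subtype.ext_iff] using hlead)
  obtain ⟨u, hu⟩ := C.coeff_surjective (fun i => c i) ⟨0, fun i hi => by simp [hc_neg i hi]⟩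
  refine ⟨u, fun h0 => hc0 (Subtype.ext ?_), fun i => hu i ▸ (c i).2,
    C.coeff_injective _ _ fun i => ?_⟩
  · simpa [h0, C.coeff_zero] using (hu 0).symm
  · rw [C.coeff_mul_tau_zpow, C.coeff_mul_eq_sum_range hlow (C.φ_poly a), hu, hrec]
    simp [hu]

/-- **Lemma 2.2(i).**
Let `φ : A → L[τ]` be a Drinfeld module of rank `n`.  There exists a series
`u ∈ L̄((τ⁻¹))^×` with `u⁻¹ · φ(F_∞) · u ⊆ k̄((τ⁻¹))`, and any such `u` has all of its
coefficients in the separable closure `L^sep` of `L` in `L̄`. -/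
theorem exists_u_and_coeff_separable :
    (∃ u : R, C.UGoodInf u) ∧
      ∀ u : R, C.UGoodInf u → ∀ i : ℤ, C.coeff u i ∈ separableClosure L Lbar := by
  obtain ⟨a, m, hm, hlow, hlead⟩ := C.exists_coeff_phi_ne_zero
  obtain ⟨u₀, hu₀, hu₀_sep, hu₀_τ⟩ := C.exists_mul_tau_pow_eq_phi_mul hm hlow hlead
  have hconj : u₀⁻¹ * C.φ a * u₀ = C.τ ^ (m : ℤ) := by
    rw [mul_assoc, ← hu₀_τ, inv_mul_cancel_left₀ hu₀]
  have hcomm : ∀ x, Commute (C.phiinf x) (C.φ a) := fun x => by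
    rw [← C.phiinf_extends]
    exact (Commute.all _ _).map C.phiinf
  refine ⟨⟨u₀, hu₀, fun x => C.isAlgebraic_coeff_of_commute_tau_pow hm
    (hconj ▸ commute_conj hu₀ (hcomm x))⟩, fun u ⟨hu, halg⟩ i => ?_⟩
  have hh_low : ∀ j < -(m : ℤ), C.coeff (u⁻¹ * C.φ a * u) j = 0 :=
    (C.w_coeff _ _).mp (by rw [C.w_val.map_conj hu]; exact (C.w_coeff _ _).mpr hlow)
  have hh_alg : ∀ j, IsAlgebraic k (C.coeff (u⁻¹ * C.φ a * u) j) := fun j => by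
    simpa [C.phiinf_extends] using halg (algebraMap F Finf a) j
  have hv : C.τ ^ (m : ℤ) * (u₀⁻¹ * u) = u₀⁻¹ * u * (u⁻¹ * C.φ a * u) := by
    rw [← hconj]
    simp only [mul_assoc, mul_inv_cancel_left₀ hu₀, mul_inv_cancel_left₀ hu]
  simpa [mul_inv_cancel_left₀ hu₀] using C.coeff_mul_mem_separableClosure hu₀_sep
    (C.isAlgebraic_coeff_of_tau_pow_mul_eq_mul hm hh_low hh_alg hv) i

end Ctx

end SatoTate
end
end

section
/- Let k = F_q and let L be a field extension of k, of characteristic p with q a power of p. Fix an integer h ≥ 1, elements b_0, …, b_h ∈ L with b_h ≠ 0, an element δ ∈ L^sep with δ^{q^h − 1} = 1/b_h, and elements a_0 = 1, a_1, a_2, … of L^sep satisfying, for every i ≥ 1, a_i^{q^h} − a_i = −∑_{0 ≤ j ≤ h−1, i+j−h ≥ 0} δ^{q^j − 1}·b_j·a_{i+j−h}^{q^j}. Fix a discrete valuation ord_v on L. Then there is a constant B ≥ 0 such that ord_v(a_i) ≥ −B for all i ≥ 0 and every valuation ord_v: L^sep → ℚ ∪ {+∞} extending ord_v. -/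
/-!
If `w(aᵢ) < 0` then `w(aᵢ^{qʰ} - aᵢ) = qʰ·w(aᵢ)`, because `qʰ ≥ 2`. On the other side of the
recursion, `w(δ) = -ord_v(b_h)/(qʰ - 1)` is determined by `δ^{qʰ-1} = 1/b_h`, so the coefficients
`δ^{qʲ-1}·b_j` (`j < h`) have valuations `≥ -B` for some `B ≥ 0` independent of `w`. By strong
induction on `i`, if `w(a_k) ≥ -B` for all `k < i` then each summand has valuation
`≥ -B - qʲB ≥ -qʰB`, since `1 + qʲ ≤ qʰ`; comparing the two sides gives `w(aᵢ) ≥ -B`.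
-/

noncomputable section
open scoped Classical

namespace SatoTateLemma82

/-- An additive valuation on a field `K`, with value group inside `Γ ∪ {+∞}`. -/
structure IsVal {K : Type*} [Field K] {Γ : Type*} [AddCommGroup Γ] [LinearOrder Γ] [IsOrderedAddMonoid Γ]
    (v : K → WithTop Γ) : Prop where
  top_iff : ∀ x, v x = ⊤ ↔ x = 0
  map_mul : ∀ x y, v (x * y) = v x + v y
  min_le : ∀ x y, min (v x) (v y) ≤ v (x + y)

end SatoTateLemma82

namespace WithTop

variable {α β : Type*}

theorem coe_untopD_le_map [Preorder β] (f : α → β) (x : WithTop α) (d : α) :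
    (f (x.untopD d) : WithTop β) ≤ x.map f := by
  cases x <;> simp

theorem map_eq_coe_untopD {f : α → β} {x : WithTop α} (d : α) (hx : x.map f ≠ ⊤) :
    x.map f = f (x.untopD d) := by
  cases x
  · simp at hx
  · rfl

end WithTop

theorem Nat.one_add_pow_le_pow {q j h : ℕ} (hq : 2 ≤ q) (hj : j < h) : 1 + q ^ j ≤ q ^ h :=
  calc 1 + q ^ j ≤ 2 * q ^ j := by have := Nat.one_le_pow j q (by omega); omega
    _ ≤ q ^ (j + 1) := by rw [pow_succ, mul_comm]; gcongr
    _ ≤ q ^ h := Nat.pow_le_pow_right (by omega) hj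

namespace AddValuation

section OrderedGroup

variable {R Γ : Type*} [Ring R] [AddCommGroup Γ] [LinearOrder Γ] [IsOrderedAddMonoid Γ]
  (v : AddValuation R (WithTop Γ))

theorem map_pow_sub_self_of_neg {x : R} (hx : v x < 0) {N : ℕ} (hN : 2 ≤ N) :
    v (x ^ N - x) = N • v x := by
  obtain ⟨r, hr⟩ := WithTop.ne_top_iff_exists.mp (hx.trans_le le_top).ne
  rw [← hr, ← WithTop.coe_zero, WithTop.coe_lt_coe] at hx
  have hNr : N • r < r := calc
    N • r ≤ 2 • r := nsmul_le_nsmul_left_of_nonpos hx.le hN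
    _ = r + r := two_nsmul r
    _ < r := add_lt_of_neg_left r hx
  rw [v.map_sub_eq_of_lt_left, v.map_pow]
  rwa [v.map_pow, ← hr, ← WithTop.coe_nsmul, WithTop.coe_lt_coe]

theorem coe_le_of_coe_nsmul_le_map_pow_sub {x : R} {c : Γ} (hc : c ≤ 0) {N : ℕ} (hN : 2 ≤ N)
    (h : ((N • c : Γ) : WithTop Γ) ≤ v (x ^ N - x)) : (c : WithTop Γ) ≤ v x := by
  by_contra! hlt
  obtain ⟨r, hr⟩ := WithTop.ne_top_iff_exists.mp (hlt.trans_le le_top).ne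
  rw [v.map_pow_sub_self_of_neg (hlt.trans_le (WithTop.coe_le_coe.mpr hc)) hN, ← hr,
    ← WithTop.coe_nsmul, WithTop.coe_le_coe] at h
  rw [← hr, WithTop.coe_lt_coe] at hlt
  exact (nsmul_lt_nsmul_right (by omega) hlt).not_ge h

theorem coe_add_nsmul_le_map_mul_pow {x y : R} {r s : Γ} (hx : (r : WithTop Γ) ≤ v x)
    (hy : (s : WithTop Γ) ≤ v y) (n : ℕ) : ((r + n • s : Γ) : WithTop Γ) ≤ v (x * y ^ n) := by
  rw [v.map_mul, v.map_pow, WithTop.coe_add, WithTop.coe_nsmul]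
  gcongr

theorem coe_nsmul_neg_le_map_sum {q h : ℕ} (hq : 2 ≤ q) {c a : ℕ → R} {B : Γ} (hB : 0 ≤ B)
    (hc : ∀ j < h, ((-B : Γ) : WithTop Γ) ≤ v (c j)) {i : ℕ}
    (ha : ∀ k < i, ((-B : Γ) : WithTop Γ) ≤ v (a k)) :
    ((q ^ h • -B : Γ) : WithTop Γ) ≤
      v (∑ j ∈ Finset.range h, if h ≤ i + j then c j * a (i + j - h) ^ q ^ j else 0) := by
  refine v.map_le_sum fun j hj => ?_
  rw [Finset.mem_range] at hj
  split_ifs with hij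
  · refine le_trans ?_ (v.coe_add_nsmul_le_map_mul_pow (hc j hj) (ha _ (by omega)) _)
    rw [WithTop.coe_le_coe]
    calc q ^ h • -B ≤ (1 + q ^ j) • -B :=
          nsmul_le_nsmul_left_of_nonpos (neg_nonpos.mpr hB) (Nat.one_add_pow_le_pow hq hj)
      _ = -B + q ^ j • -B := by rw [add_nsmul, one_nsmul]
  · simp

theorem coe_neg_le_map_of_pow_sub_self_eq {q h : ℕ} (hq : 2 ≤ q) (hh : 1 ≤ h) {c a : ℕ → R}
    (hrec : ∀ i, 1 ≤ i → a i ^ q ^ h - a i =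
      -∑ j ∈ Finset.range h, if h ≤ i + j then c j * a (i + j - h) ^ q ^ j else 0)
    {B : Γ} (hB : 0 ≤ B) (ha0 : ((-B : Γ) : WithTop Γ) ≤ v (a 0))
    (hc : ∀ j < h, ((-B : Γ) : WithTop Γ) ≤ v (c j)) (i : ℕ) :
    ((-B : Γ) : WithTop Γ) ≤ v (a i) := by
  induction i using Nat.strong_induction_on with
  | _ i ih =>
    rcases Nat.eq_zero_or_pos i with rfl | hi
    · exact ha0
    have hqh : 2 ≤ q ^ h := hq.trans (Nat.le_self_pow (by omega) q)
    refine v.coe_le_of_coe_nsmul_le_map_pow_sub (neg_nonpos.mpr hB) hqh ?_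
    rw [hrec i hi, v.map_neg]
    exact v.coe_nsmul_neg_le_map_sum hq hB hc ih

end OrderedGroup

theorem map_eq_coe_div_of_map_pow_eq {R Γ : Type*} [Ring R] [Field Γ] [LinearOrder Γ]
    [IsStrictOrderedRing Γ] (v : AddValuation R (WithTop Γ)) {x : R} {n : ℕ} (hn : n ≠ 0)
    {c : Γ} (h : v (x ^ n) = c) : v x = ((c / n : Γ) : WithTop Γ) := by
  rw [v.map_pow] at h
  obtain ⟨r, hr⟩ : ∃ r : Γ, (r : WithTop Γ) = v x := by
    refine WithTop.ne_top_iff_exists.mp fun htop => WithTop.coe_ne_top (a := c) ?_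
    obtain ⟨m, rfl⟩ := Nat.exists_eq_succ_of_ne_zero hn
    rw [← h, htop, succ_nsmul, WithTop.add_top]
  rw [← hr, ← WithTop.coe_nsmul, WithTop.coe_eq_coe, nsmul_eq_mul] at h
  rw [← hr, ← h, mul_div_cancel_left₀ _ (Nat.cast_ne_zero.mpr hn)]

end AddValuation

namespace SatoTateLemma82

namespace IsVal

variable {K Γ : Type*} [Field K] [AddCommGroup Γ] [LinearOrder Γ] [IsOrderedAddMonoid Γ]
  {w : K → WithTop Γ}

theorem map_one (hw : IsVal w) : w 1 = 0 := by
  obtain ⟨r, hr⟩ := WithTop.ne_top_iff_exists.mp (mt (hw.top_iff 1).mp one_ne_zero)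
  have h := hw.map_mul 1 1
  rw [one_mul, ← hr, ← WithTop.coe_add, WithTop.coe_eq_coe, left_eq_add] at h
  rw [← hr, h, WithTop.coe_zero]

def toAddValuation (hw : IsVal w) : AddValuation K (WithTop Γ) :=
  AddValuation.of w ((hw.top_iff 0).mpr rfl) hw.map_one hw.min_le hw.map_mul

@[simp]
theorem toAddValuation_apply (hw : IsVal w) (x : K) : hw.toAddValuation x = w x := rfl

end IsVal

section Extension

variable {L K : Type*} [Field L] [Field K] [Algebra L K] {v : L → WithTop ℤ}
  {w : K → WithTop ℚ}

theorem coe_untopD_le_of_map_algebraMap_eq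
    (hwv : ∀ x : L, w (algebraMap L K x) = (v x).map (fun z : ℤ => (z : ℚ))) (x : L) :
    ((((v x).untopD 0 : ℤ) : ℚ) : WithTop ℚ) ≤ w (algebraMap L K x) := by
  rw [hwv]
  exact WithTop.coe_untopD_le_map _ (v x) 0

theorem map_algebraMap_eq_coe_untopD (hw : IsVal w)
    (hwv : ∀ x : L, w (algebraMap L K x) = (v x).map (fun z : ℤ => (z : ℚ))) {x : L}
    (hx : x ≠ 0) : w (algebraMap L K x) = (((v x).untopD 0 : ℤ) : ℚ) := by
  have hne : w (algebraMap L K x) ≠ ⊤ := mt (hw.top_iff _).mp ((map_ne_zero _).mpr hx)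
  rw [hwv] at hne ⊢
  exact WithTop.map_eq_coe_untopD 0 hne

end Extension

theorem valuations_of_coefficients_bounded_below_general
    (p : ℕ) [Fact p.Prime] (e : ℕ) (he : 0 < e) (q : ℕ) (hq : q = p ^ e)
    (L Lsep : Type) [Field L] [Field Lsep] [Algebra L Lsep]
    -- a discrete (`ℤ`-valued) valuation on `L`
    (v : L → WithTop ℤ)
    (h : ℕ) (hh : 1 ≤ h)
    (b : ℕ → L) (hbh : b h ≠ 0)
    (δ : Lsep) (hδ : δ ^ (q ^ h - 1) = (algebraMap L Lsep (b h))⁻¹)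
    (a : ℕ → Lsep) (ha0 : a 0 = 1)
    (harec : ∀ i : ℕ, 1 ≤ i →
      a i ^ q ^ h - a i =
        -∑ j ∈ Finset.range h, if h ≤ i + j then
            δ ^ (q ^ j - 1) * algebraMap L Lsep (b j) * a (i + j - h) ^ q ^ j
          else 0) :
    ∃ B : ℚ, 0 ≤ B ∧
      ∀ w : Lsep → WithTop ℚ, IsVal w →
        (∀ x : L, w (algebraMap L Lsep x) = (v x).map (fun z : ℤ => (z : ℚ))) →
        ∀ i : ℕ, ((-B : ℚ) : WithTop ℚ) ≤ w (a i) := by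
  have hq2 : 2 ≤ q := hq ▸ (Fact.out : p.Prime).two_le.trans (Nat.le_self_pow he.ne' p)
  set ν : L → ℚ := fun x => (((v x).untopD 0 : ℤ) : ℚ)
  set d : ℚ := -ν (b h) / (q ^ h - 1 : ℕ)
  obtain ⟨C, hC⟩ := ((Set.finite_Iio h).image fun j => ν (b j) + (q ^ j - 1) • d).bddBelow
  refine ⟨|C|, abs_nonneg C, fun w hw hwv => ?_⟩
  set W := hw.toAddValuation
  have hWδ : W δ = d := W.map_eq_coe_div_of_map_pow_eq
    (Nat.sub_pos_of_lt (Nat.one_lt_pow (by omega) hq2)).ne' (by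
      rw [hδ, W.map_inv, IsVal.toAddValuation_apply, map_algebraMap_eq_coe_untopD hw hwv hbh,
        WithTop.LinearOrderedAddCommGroup.coe_neg])
  refine W.coe_neg_le_map_of_pow_sub_self_eq hq2 hh harec (abs_nonneg C) ?_ fun j hj => ?_
  · rw [IsVal.toAddValuation_apply, ha0, hw.map_one, ← WithTop.coe_zero, WithTop.coe_le_coe]
    exact neg_nonpos.mpr (abs_nonneg C)
  · calc ((-|C| : ℚ) : WithTop ℚ) ≤ (ν (b j) + (q ^ j - 1) • d : ℚ) :=
          WithTop.coe_le_coe.mpr ((neg_abs_le C).trans (hC ⟨j, hj, rfl⟩))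
      _ ≤ W (algebraMap L Lsep (b j) * δ ^ (q ^ j - 1)) :=
          W.coe_add_nsmul_le_map_mul_pow (coe_untopD_le_of_map_algebraMap_eq hwv (b j)) hWδ.ge _
      _ = W (δ ^ (q ^ j - 1) * algebraMap L Lsep (b j)) := by rw [mul_comm]

theorem valuations_of_coefficients_bounded_below
    (p : ℕ) [Fact p.Prime] (e : ℕ) (he : 0 < e) (q : ℕ) (hq : q = p ^ e)
    (L Lsep : Type) [Field L] [CharP L p] [Field Lsep] [Algebra L Lsep]
    [Algebra.IsAlgebraic L Lsep] [Algebra.IsSeparable L Lsep]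
    -- a discrete (`ℤ`-valued) valuation on `L`
    (v : L → WithTop ℤ) (hv : IsVal v)
    (h : ℕ) (hh : 1 ≤ h)
    (b : ℕ → L) (hbh : b h ≠ 0)
    (δ : Lsep) (hδ : δ ^ (q ^ h - 1) = (algebraMap L Lsep (b h))⁻¹)
    (a : ℕ → Lsep) (ha0 : a 0 = 1)
    (harec : ∀ i : ℕ, 1 ≤ i →
      a i ^ q ^ h - a i =
        -∑ j ∈ Finset.range h, if h ≤ i + j then
            δ ^ (q ^ j - 1) * algebraMap L Lsep (b j) * a (i + j - h) ^ q ^ j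
          else 0) :
    ∃ B : ℚ, 0 ≤ B ∧
      ∀ w : Lsep → WithTop ℚ, IsVal w →
        (∀ x : L, w (algebraMap L Lsep x) = (v x).map (fun z : ℤ => (z : ℚ))) →
        ∀ i : ℕ, ((-B : ℚ) : WithTop ℚ) ≤ w (a i) :=
  valuations_of_coefficients_bounded_below_general p e he q hq L Lsep v h hh b hbh δ hδ a ha0 harec

end SatoTateLemma82
end
end
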